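/- arXiv:1104.2872 — 6 statements merged into one kernel-verified Lean document; each statement's English description precedes it below -/
import Mathlib

section
/- Let δ₁ ≤ 1/36 be a positive real and let a₁ ≥ a₂ ≥ ⋯ ≥ a_ℓ ≥ 0 be reals with sum a, such that a₁ < δ₁·a. If each a_j is included independently with probability 1/2 and b denotes the sum of included numbers, then Pr(a/3 < b < 2a/3) ≥ 3/4. -/
/-!
Write `b(T) = ∑_{j ∈ T} a j` and `A = ∑_j a j`. Averaged over all subsets `T`, the deviation
`2 b(T) - A = ∑_j ±a j` has second moment `∑_j (a j)^2`, since the signs of distinct indices are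
uncorrelated. As `(a j)^2 ≤ a₁ · a j`, this is at most `a₁ A < δ₁ A² ≤ A²/36`, while a subset
outside the event has `|2 b(T) - A| ≥ A/3`. Chebyshev's inequality then bounds the proportion
of such subsets by `(A²/36) / (A/3)² = 1/4`.
-/

open Finset

theorem sum_powerset_sq_two_mul_sum_sub_sum {ι R : Type*} [DecidableEq ι] [CommRing R]
    (s : Finset ι) (a : ι → R) :
    ∑ T ∈ s.powerset, (2 * ∑ j ∈ T, a j - ∑ j ∈ s, a j) ^ 2 = 2 ^ #s * ∑ j ∈ s, a j ^ 2 := by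
  induction s using Finset.induction_on with
  | empty => simp
  | insert x s hx ih =>
    rw [sum_powerset_insert hx, ← sum_add_distrib, card_insert_of_notMem hx,
      sum_insert hx, sum_insert hx]
    have hpair : ∀ T ∈ s.powerset,
        (2 * ∑ j ∈ T, a j - (a x + ∑ j ∈ s, a j)) ^ 2
          + (2 * ∑ j ∈ insert x T, a j - (a x + ∑ j ∈ s, a j)) ^ 2
        = 2 * (2 * ∑ j ∈ T, a j - ∑ j ∈ s, a j) ^ 2 + 2 * a x ^ 2 := by
      intro T hT
      rw [sum_insert fun h => hx (mem_powerset.mp hT h)]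
      ring
    rw [sum_congr rfl hpair, sum_add_distrib, ← mul_sum, ih, sum_const, card_powerset,
      nsmul_eq_mul]
    push_cast
    ring

theorem card_filter_le_abs_mul_sq_le_sum_sq {β : Type*} (P : Finset β) (f : β → ℝ) {t : ℝ}
    (ht : 0 ≤ t) : #{x ∈ P | t ≤ |f x|} * t ^ 2 ≤ ∑ x ∈ P, f x ^ 2 := by
  calc #{x ∈ P | t ≤ |f x|} * t ^ 2
      ≤ ∑ x ∈ P with t ≤ |f x|, f x ^ 2 := by
        rw [← nsmul_eq_mul]
        refine card_nsmul_le_sum _ _ _ fun x hx => ?_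
        rw [← sq_abs (f x)]
        exact pow_le_pow_left₀ ht (mem_filter.mp hx).2 2
    _ ≤ ∑ x ∈ P, f x ^ 2 :=
        sum_le_sum_of_subset_of_nonneg (filter_subset _ _) fun x _ _ => sq_nonneg (f x)

theorem sum_sq_le_mul_sum {ι : Type*} (s : Finset ι) (a : ι → ℝ) {M : ℝ}
    (h0 : ∀ j ∈ s, 0 ≤ a j) (hM : ∀ j ∈ s, a j ≤ M) :
    ∑ j ∈ s, a j ^ 2 ≤ M * ∑ j ∈ s, a j := by
  rw [mul_sum]
  exact sum_le_sum fun j hj => by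
    rw [sq]
    exact mul_le_mul_of_nonneg_right (hM j hj) (h0 j hj)

theorem three_quarters_mul_two_pow_card_le_card_filter {ι : Type*} [DecidableEq ι]
    (s : Finset ι) (a : ι → ℝ) (hA : 0 < ∑ j ∈ s, a j)
    (hsq : 36 * ∑ j ∈ s, a j ^ 2 ≤ (∑ j ∈ s, a j) ^ 2) :
    3 / 4 * 2 ^ #s ≤ (#{T ∈ s.powerset |
      (∑ j ∈ s, a j) / 3 < ∑ j ∈ T, a j ∧ ∑ j ∈ T, a j < 2 * (∑ j ∈ s, a j) / 3} : ℝ) := by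
  set A := ∑ j ∈ s, a j
  set good := {T ∈ s.powerset | A / 3 < ∑ j ∈ T, a j ∧ ∑ j ∈ T, a j < 2 * A / 3}
  set bad := {T ∈ s.powerset | ¬(A / 3 < ∑ j ∈ T, a j ∧ ∑ j ∈ T, a j < 2 * A / 3)}
  have hsplit : (#good : ℝ) + #bad = 2 ^ #s := by
    have := card_filter_add_card_filter_not
      (s := s.powerset) (fun T => A / 3 < ∑ j ∈ T, a j ∧ ∑ j ∈ T, a j < 2 * A / 3)
    rw [card_powerset] at this
    exact_mod_cast this
  have hbad : #bad ≤ #{T ∈ s.powerset | A / 3 ≤ |2 * ∑ j ∈ T, a j - A|} := by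
    refine card_le_card (monotone_filter_right _ fun T _ hT => ?_)
    rw [not_and_or, not_lt, not_lt] at hT
    rw [le_abs']
    rcases hT with h | h
    · left; linarith
    · right; linarith
  have hcheb := card_filter_le_abs_mul_sq_le_sum_sq s.powerset
    (fun T => 2 * ∑ j ∈ T, a j - A) (by positivity : 0 ≤ A / 3)
  rw [sum_powerset_sq_two_mul_sum_sub_sum] at hcheb
  have hbad_sq : (#bad : ℝ) * (A / 3) ^ 2 ≤ 2 ^ #s * (A ^ 2 / 36) :=
    calc (#bad : ℝ) * (A / 3) ^ 2 ≤ 2 ^ #s * ∑ j ∈ s, a j ^ 2 := le_trans (by gcongr) hcheb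
      _ ≤ 2 ^ #s * (A ^ 2 / 36) := by gcongr; linarith
  have hbad_le : (#bad : ℝ) ≤ 2 ^ #s / 4 := by
    have hA2 : 0 < A ^ 2 := by positivity
    nlinarith
  linarith

/-- Sampling lemma: with `a 0 ≥ a 1 ≥ ⋯ ≥ 0`, total sum `a`, largest element `< δ₁ · a`
with `0 < δ₁ ≤ 1/36`, if each number is selected independently with probability 1/2 and
`b` is the sum of the selected numbers, then `Pr(a/3 < b < 2a/3) ≥ 3/4`.  The probability
is expressed as the total mass `(1/2)^ℓ` of the subsets realizing the event. -/
theorem stmt1 {ℓ : ℕ} (hℓ : 0 < ℓ) (a : Fin ℓ → ℝ) (δ₁ : ℝ)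
    (hδpos : 0 < δ₁) (hδ : δ₁ ≤ 1 / 36)
    (hnn : ∀ j, 0 ≤ a j) (hmono : ∀ i j : Fin ℓ, i ≤ j → a j ≤ a i)
    (ha1 : a ⟨0, hℓ⟩ < δ₁ * ∑ i, a i) :
    (3 : ℝ) / 4 ≤
      ∑ S ∈ (Finset.univ : Finset (Fin ℓ)).powerset.filter
          (fun S => (∑ i, a i) / 3 < ∑ j ∈ S, a j ∧ ∑ j ∈ S, a j < 2 * (∑ i, a i) / 3),
        ((1 : ℝ) / 2) ^ ℓ := by
  set A := ∑ i, a i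
  have hA : 0 < A := pos_of_mul_pos_right ((hnn _).trans_lt ha1) hδpos.le
  have hsq : 36 * ∑ j, a j ^ 2 ≤ A ^ 2 := by
    have := sum_sq_le_mul_sum univ a (fun j _ => hnn j)
      (fun j _ => hmono ⟨0, hℓ⟩ j (Nat.zero_le j))
    nlinarith
  have hcard := three_quarters_mul_two_pow_card_le_card_filter univ a hA hsq
  rw [card_univ, Fintype.card_fin] at hcard
  rw [sum_const, nsmul_eq_mul]
  calc (3 : ℝ) / 4 = 3 / 4 * 2 ^ ℓ * (1 / 2) ^ ℓ := by
        rw [mul_assoc, ← mul_pow]; norm_num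
    _ ≤ _ := by gcongr
end

section
/- Let M₁ and M₂ be two matroids on the same finite ground set with nonnegative weights. The greedy algorithm that processes elements in decreasing weight order and adds an element whenever the result remains independent in both matroids outputs a common independent set whose weight is at least half of the maximum weight of any common independent set. -/
/-!
Both greedy and any common independent set `S` are compared prefix by prefix of the sorted list.
On each prefix the greedy set `G` is maximal among common independent sets, so every element of
`S` outside `G` is blocked in `M₁` or in `M₂`; by the exchange axiom each matroid blocks at most
`|G|` of them, whence `|S| ≤ 2 |G|` on every prefix. Writing the weights as a sum of indicator
functions of prefixes (a layer-cake decomposition, possible because the list is sorted and the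
weights are nonnegative) turns these cardinality bounds into the weight bound.
-/

open Classical in
/-- The greedy algorithm: process the elements of the list in order, adding an element
whenever the result still satisfies the predicate `P`. -/
noncomputable def greedy {E : Type*} [DecidableEq E] (P : Finset E → Prop) :
    List E → Finset E → Finset E
  | [], S => S
  | e :: l, S => if P (insert e S) then greedy P l (insert e S) else greedy P l S

section Greedy

variable {E : Type*} [DecidableEq E] (P : Finset E → Prop)

open Classical in
lemma greedy_cons (e : E) (l : List E) (S : Finset E) :
    greedy P (e :: l) S =
      if P (insert e S) then greedy P l (insert e S) else greedy P l S := rfl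

lemma subset_greedy : ∀ (l : List E) (S : Finset E), S ⊆ greedy P l S
  | [], S => Finset.Subset.refl S
  | e :: l, S => by
      rw [greedy_cons]
      split
      · exact (Finset.subset_insert e S).trans (subset_greedy l (insert e S))
      · exact subset_greedy l S

lemma prop_greedy : ∀ (l : List E) {S : Finset E}, P S → P (greedy P l S)
  | [], _, hS => hS
  | e :: l, S, hS => by
      rw [greedy_cons]
      split
      · exact prop_greedy l ‹_›
      · exact prop_greedy l hS

lemma greedy_append : ∀ (l₁ l₂ : List E) (S : Finset E),
    greedy P (l₁ ++ l₂) S = greedy P l₂ (greedy P l₁ S)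
  | [], _, _ => rfl
  | a :: l₁, l₂, S => by
      rw [List.cons_append, greedy_cons, greedy_cons]
      split <;> exact greedy_append l₁ l₂ _

-- A rejected element was already blocked by a subset of the final output.
lemma not_prop_insert_greedy (hdown : ∀ s t : Finset E, s ⊆ t → P t → P s) :
    ∀ {l : List E} (S : Finset E) {e : E}, e ∈ l → e ∉ greedy P l S →
      ¬ P (insert e (greedy P l S))
  | a :: l, S, e, he, hne => by
      rw [greedy_cons] at hne ⊢
      by_cases ha : P (insert a S)
      · rw [if_pos ha] at hne ⊢
        rcases List.mem_cons.mp he with rfl | he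
        · exact absurd (subset_greedy P l _ (Finset.mem_insert_self e S)) hne
        · exact not_prop_insert_greedy hdown _ he hne
      · rw [if_neg ha] at hne ⊢
        rcases List.mem_cons.mp he with rfl | he
        · exact fun hP ↦ ha (hdown _ _ (Finset.insert_subset_insert _ (subset_greedy P l S)) hP)
        · exact not_prop_insert_greedy hdown _ he hne

lemma sum_greedy_append_singleton_of_eq_zero {w : E → ℝ} {f : E} (hf : w f = 0)
    (l : List E) (S : Finset E) :
    ∑ e ∈ greedy P (l ++ [f]) S, w e = ∑ e ∈ greedy P l S, w e := by
  rw [greedy_append, greedy_cons]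
  split
  · exact Finset.sum_insert_of_eq_zero_if_notMem fun _ ↦ hf
  · rfl

theorem sum_le_mul_sum_greedy_of_card_le (hdown : ∀ s t : Finset E, s ⊆ t → P t → P s)
    (k : ℕ) (hcard : ∀ (l : List E) (S : Finset E), S ⊆ l.toFinset → P S →
      S.card ≤ k * (greedy P l ∅).card)
    (l : List E) (w : E → ℝ) (hsorted : l.Pairwise (fun e f ↦ w f ≤ w e))
    (hw : ∀ e ∈ l, 0 ≤ w e) (S : Finset E) (hSl : S ⊆ l.toFinset) (hS : P S) :
    ∑ e ∈ S, w e ≤ k * ∑ e ∈ greedy P l ∅, w e := by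
  induction l using List.reverseRecOn generalizing w S with
  | nil =>
      obtain rfl : S = ∅ := Finset.subset_empty.mp (by simpa using hSl)
      simp [greedy]
  | append_singleton l f ih =>
      -- peel off the bottom layer: `w f` is the least weight on `l ++ [f]`
      set w' := fun e ↦ w e - w f
      have hw'f : w' f = 0 := sub_self _
      have hmin : ∀ e ∈ l, w f ≤ w e := fun e he ↦
        (List.pairwise_append.mp hsorted).2.2 e he f (List.mem_singleton_self f)
      have hSl' : S.erase f ⊆ l.toFinset := fun e he ↦ by
        have := hSl (Finset.mem_of_mem_erase he)
        simp only [List.toFinset_append, Finset.mem_union, List.mem_toFinset,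
          List.toFinset_cons, List.toFinset_nil, insert_empty_eq, Finset.mem_singleton] at this
        exact List.mem_toFinset.mpr (this.resolve_right (Finset.ne_of_mem_erase he))
      have hw' : ∑ e ∈ S, w' e ≤ k * ∑ e ∈ greedy P (l ++ [f]) ∅, w' e := by
        rw [← Finset.sum_erase S hw'f, sum_greedy_append_singleton_of_eq_zero P hw'f]
        exact ih w' ((List.pairwise_append.mp hsorted).1.imp fun h ↦ sub_le_sub_right h _)
          (fun e he ↦ sub_nonneg.mpr (hmin e he)) _ hSl'
          (hdown _ S (Finset.erase_subset f S) hS)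
      have hlayer : (S.card : ℝ) * w f ≤ k * ((greedy P (l ++ [f]) ∅).card * w f) := by
        rw [← mul_assoc]
        exact mul_le_mul_of_nonneg_right (by exact_mod_cast hcard _ S hSl hS) (hw f (by simp))
      have hsplit : ∀ T : Finset E, ∑ e ∈ T, w e = ∑ e ∈ T, w' e + T.card * w f := fun T ↦ by
        simp only [w', Finset.sum_sub_distrib, Finset.sum_const, nsmul_eq_mul]
        ring
      rw [hsplit S, hsplit]
      linarith

end Greedy

section MatroidIntersection

variable {E : Type*} [DecidableEq E]

lemma card_le_card_of_forall_not_indep_insert {Indep : Finset E → Prop}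
    (h_exch : ∀ s t : Finset E, Indep s → Indep t → s.card < t.card →
      ∃ e ∈ t, e ∉ s ∧ Indep (insert e s))
    {T A : Finset E} (hT : Indep T) (hA : Indep A)
    (hblocked : ∀ e ∈ A, e ∉ T → ¬ Indep (insert e T)) :
    A.card ≤ T.card := by
  by_contra! hlt
  obtain ⟨e, heA, heT, hind⟩ := h_exch T A hT hA hlt
  exact hblocked e heA heT hind

lemma card_le_two_mul_card_of_maximal {Indep₁ Indep₂ : Finset E → Prop}
    (h_sub₁ : ∀ s t : Finset E, s ⊆ t → Indep₁ t → Indep₁ s)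
    (h_sub₂ : ∀ s t : Finset E, s ⊆ t → Indep₂ t → Indep₂ s)
    (h_exch₁ : ∀ s t : Finset E, Indep₁ s → Indep₁ t → s.card < t.card →
      ∃ e ∈ t, e ∉ s ∧ Indep₁ (insert e s))
    (h_exch₂ : ∀ s t : Finset E, Indep₂ s → Indep₂ t → s.card < t.card →
      ∃ e ∈ t, e ∉ s ∧ Indep₂ (insert e s))
    {T S : Finset E} (hT₁ : Indep₁ T) (hT₂ : Indep₂ T) (hS₁ : Indep₁ S) (hS₂ : Indep₂ S)
    (hmax : ∀ e ∈ S, e ∉ T → ¬ (Indep₁ (insert e T) ∧ Indep₂ (insert e T))) :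
    S.card ≤ 2 * T.card := by
  classical
  set A := S.filter fun e ↦ e ∈ T ∨ ¬ Indep₁ (insert e T)
  set B := S.filter fun e ↦ ¬ Indep₂ (insert e T)
  have hSAB : S ⊆ A ∪ B := fun e he ↦ by
    by_cases heT : e ∈ T
    · exact Finset.mem_union_left _ (Finset.mem_filter.mpr ⟨he, .inl heT⟩)
    · rcases not_and_or.mp (hmax e he heT) with h | h
      · exact Finset.mem_union_left _ (Finset.mem_filter.mpr ⟨he, .inr h⟩)
      · exact Finset.mem_union_right _ (Finset.mem_filter.mpr ⟨he, h⟩)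
  have hA : A.card ≤ T.card :=
    card_le_card_of_forall_not_indep_insert h_exch₁ hT₁ (h_sub₁ _ S (Finset.filter_subset _ _) hS₁)
      fun e he heT ↦ ((Finset.mem_filter.mp he).2.resolve_left heT)
  have hB : B.card ≤ T.card :=
    card_le_card_of_forall_not_indep_insert h_exch₂ hT₂ (h_sub₂ _ S (Finset.filter_subset _ _) hS₂)
      fun e he _ ↦ (Finset.mem_filter.mp he).2
  calc S.card ≤ (A ∪ B).card := Finset.card_le_card hSAB
    _ ≤ A.card + B.card := Finset.card_union_le _ _
    _ ≤ 2 * T.card := by omega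

end MatroidIntersection

theorem stmt5_general {E : Type*} [DecidableEq E] (Indep₁ Indep₂ : Finset E → Prop)
    (w : E → ℝ) (hw : ∀ e, 0 ≤ w e)
    (h_empty₁ : Indep₁ ∅) (h_empty₂ : Indep₂ ∅)
    (h_sub₁ : ∀ s t : Finset E, s ⊆ t → Indep₁ t → Indep₁ s)
    (h_sub₂ : ∀ s t : Finset E, s ⊆ t → Indep₂ t → Indep₂ s)
    (h_exch₁ : ∀ s t : Finset E, Indep₁ s → Indep₁ t → s.card < t.card →
      ∃ e ∈ t, e ∉ s ∧ Indep₁ (insert e s))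
    (h_exch₂ : ∀ s t : Finset E, Indep₂ s → Indep₂ t → s.card < t.card →
      ∃ e ∈ t, e ∉ s ∧ Indep₂ (insert e s))
    (l : List E) (hsorted : l.Pairwise (fun e f => w f ≤ w e)) :
    (Indep₁ (greedy (fun s => Indep₁ s ∧ Indep₂ s) l ∅) ∧
      Indep₂ (greedy (fun s => Indep₁ s ∧ Indep₂ s) l ∅)) ∧
      ∀ s : Finset E, s ⊆ l.toFinset → Indep₁ s → Indep₂ s →
        ∑ e ∈ s, w e ≤ 2 * ∑ e ∈ greedy (fun s => Indep₁ s ∧ Indep₂ s) l ∅, w e := by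
  set P := fun s : Finset E ↦ Indep₁ s ∧ Indep₂ s
  have hdown : ∀ s t : Finset E, s ⊆ t → P t → P s :=
    fun s t hst ht ↦ ⟨h_sub₁ s t hst ht.1, h_sub₂ s t hst ht.2⟩
  have hgreedy : ∀ l : List E, P (greedy P l ∅) := fun l ↦ prop_greedy P l ⟨h_empty₁, h_empty₂⟩
  have hcard : ∀ (l : List E) (S : Finset E), S ⊆ l.toFinset → P S →
      S.card ≤ 2 * (greedy P l ∅).card := fun l S hSl hS ↦
    card_le_two_mul_card_of_maximal h_sub₁ h_sub₂ h_exch₁ h_exch₂ (hgreedy l).1 (hgreedy l).2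
      hS.1 hS.2 fun e he ↦ not_prop_insert_greedy P hdown ∅ (List.mem_toFinset.mp (hSl he))
  refine ⟨hgreedy l, fun s hsl hs₁ hs₂ ↦ ?_⟩
  exact_mod_cast sum_le_mul_sum_greedy_of_card_le P hdown 2 hcard l w hsorted
    (fun e _ ↦ hw e) s hsl ⟨hs₁, hs₂⟩

/-- Greedy for the intersection of two matroids `Indep₁`, `Indep₂` on the same ground set,
processing elements by decreasing weight: the output is a common independent set whose
weight is at least half the weight of any common independent set. -/
theorem stmt5 {E : Type*} [DecidableEq E] (Indep₁ Indep₂ : Finset E → Prop)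
    (w : E → ℝ) (hw : ∀ e, 0 ≤ w e)
    (h_empty₁ : Indep₁ ∅) (h_empty₂ : Indep₂ ∅)
    (h_sub₁ : ∀ s t : Finset E, s ⊆ t → Indep₁ t → Indep₁ s)
    (h_sub₂ : ∀ s t : Finset E, s ⊆ t → Indep₂ t → Indep₂ s)
    (h_exch₁ : ∀ s t : Finset E, Indep₁ s → Indep₁ t → s.card < t.card →
      ∃ e ∈ t, e ∉ s ∧ Indep₁ (insert e s))
    (h_exch₂ : ∀ s t : Finset E, Indep₂ s → Indep₂ t → s.card < t.card →
      ∃ e ∈ t, e ∉ s ∧ Indep₂ (insert e s))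
    (l : List E) (hl : l.Nodup) (hsorted : l.Pairwise (fun e f => w f ≤ w e)) :
    (Indep₁ (greedy (fun s => Indep₁ s ∧ Indep₂ s) l ∅) ∧
      Indep₂ (greedy (fun s => Indep₁ s ∧ Indep₂ s) l ∅)) ∧
      ∀ s : Finset E, s ⊆ l.toFinset → Indep₁ s → Indep₂ s →
        ∑ e ∈ s, w e ≤ 2 * ∑ e ∈ greedy (fun s => Indep₁ s ∧ Indep₂ s) l ∅, w e :=
  stmt5_general Indep₁ Indep₂ w hw h_empty₁ h_empty₂ h_sub₁ h_sub₂ h_exch₁ h_exch₂ l hsorted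
end

section
/- In the generalized assignment problem, for any stable assignment A* (with respect to preferences of jobs by value and machines by value/capacity ratio, with virtual capacity (λ−1)/λ·C_k) restricted to pairs with c_{ik} ≤ C_k/λ, the optimal assignment OPT on these pairs satisfies v(OPT) ≤ (2 + 1/(λ−1))·v(A*). -/
open Classical

/-!
Write `θ = (λ−1)/λ`. A job that does not gain by moving from its `A*`-machine to its
`OPT`-machine is paid for by its own value in `A*`. A job that does gain is blocked only by the
machine side of stability: its `OPT`-machine `k` carries load at least `θ · C k` in `A*`, all of
density at least its own. The gaining jobs that `OPT` puts on `k` fit into `C k`, so comparing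
densities they are worth at most `v(A*_k) / θ`. Summing over machines,
`v(OPT) ≤ (1 + 1/θ) · v(A*) = (2 + 1/(λ−1)) · v(A*)`.
-/

open Finset

theorem mul_sum_le_sum_of_mul_le_mul {ι : Type*} {v c : ι → ℝ} {S T : Finset ι} {cap θ : ℝ}
    (hv : ∀ i, 0 ≤ v i) (hcap : 0 < cap)
    (hS : ∑ i ∈ S, c i ≤ cap) (hT : θ * cap ≤ ∑ j ∈ T, c j)
    (hdens : ∀ i ∈ S, ∀ j ∈ T, v i * c j ≤ v j * c i) :
    θ * ∑ i ∈ S, v i ≤ ∑ j ∈ T, v j := by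
  have hvS : 0 ≤ ∑ i ∈ S, v i := sum_nonneg fun i _ => hv i
  have hvT : 0 ≤ ∑ j ∈ T, v j := sum_nonneg fun j _ => hv j
  have hcross : (∑ i ∈ S, v i) * ∑ j ∈ T, c j ≤ (∑ j ∈ T, v j) * ∑ i ∈ S, c i := by
    rw [sum_mul_sum, sum_mul_sum, sum_comm]
    exact sum_le_sum fun j hj => sum_le_sum fun i hi => hdens i hi j hj
  refine le_of_mul_le_mul_right ?_ hcap
  calc θ * (∑ i ∈ S, v i) * cap = (θ * cap) * ∑ i ∈ S, v i := by ring
    _ ≤ (∑ j ∈ T, c j) * ∑ i ∈ S, v i := mul_le_mul_of_nonneg_right hT hvS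
    _ = (∑ i ∈ S, v i) * ∑ j ∈ T, c j := mul_comm _ _
    _ ≤ (∑ j ∈ T, v j) * ∑ i ∈ S, c i := hcross
    _ ≤ (∑ j ∈ T, v j) * cap := mul_le_mul_of_nonneg_left hS hvT

section GAP

variable {Job Machine : Type*} {v c : Job → Machine → ℝ} {C : Machine → ℝ} {θ : ℝ}
  {A Astar Aopt : Job → Option Machine}

def jobValue (v : Job → Machine → ℝ) (A : Job → Option Machine) (i : Job) : ℝ :=
  (A i).elim 0 (v i)

theorem jobValue_nonneg (hv : ∀ i k, 0 ≤ v i k) (i : Job) : 0 ≤ jobValue v A i := by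
  unfold jobValue
  cases A i <;> simp [hv]

theorem jobValue_of_eq_some {i : Job} {k : Machine} (h : A i = some k) :
    jobValue v A i = v i k := by
  simp [jobValue, h]

variable [Fintype Job]

noncomputable def jobsOn (A : Job → Option Machine) (k : Machine) : Finset Job :=
  univ.filter fun i => A i = some k

theorem mem_jobsOn {i : Job} {k : Machine} : i ∈ jobsOn A k ↔ A i = some k := by
  simp [jobsOn]

def IsFeasible (c : Job → Machine → ℝ) (C : Machine → ℝ) (A : Job → Option Machine) : Prop :=
  ∀ k, ∑ i ∈ jobsOn A k, c i k ≤ C k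

def IsStable (v c : Job → Machine → ℝ) (C : Machine → ℝ) (θ : ℝ) (A : Job → Option Machine) :
    Prop :=
  ∀ i k, A i ≠ some k →
    v i k ≤ jobValue v A i ∨
      ((∀ i', A i' = some k → v i k / c i k ≤ v i' k / c i' k) ∧
        θ * C k ≤ ∑ i' ∈ jobsOn A k, c i' k)

theorem mul_sum_gaining_on_le (hv : ∀ i k, 0 ≤ v i k) (hc : ∀ i k, 0 < c i k)
    (hopt : IsFeasible c C Aopt) (hstable : IsStable v c C θ Astar) (k : Machine) :
    θ * ∑ i ∈ jobsOn Aopt k with jobValue v Astar i < jobValue v Aopt i, jobValue v Aopt i ≤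
      ∑ i ∈ jobsOn Astar k, jobValue v Astar i := by
  set S := {i ∈ jobsOn Aopt k | jobValue v Astar i < jobValue v Aopt i}
  have hSk : ∀ i ∈ S, Aopt i = some k := fun i hi => mem_jobsOn.1 (mem_filter.1 hi).1
  have hblocked : ∀ i ∈ S, (∀ i', Astar i' = some k → v i k / c i k ≤ v i' k / c i' k) ∧
      θ * C k ≤ ∑ i' ∈ jobsOn Astar k, c i' k := by
    intro i hi
    have hgain : jobValue v Astar i < v i k := by
      simpa [jobValue_of_eq_some (hSk i hi)] using (mem_filter.1 hi).2
    have hmoved : Astar i ≠ some k := fun h => (jobValue_of_eq_some h).not_lt hgain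
    exact (hstable i k hmoved).resolve_left hgain.not_ge
  rcases S.eq_empty_or_nonempty with hS | ⟨i₀, hi₀⟩
  · simpa [hS] using sum_nonneg fun i _ => jobValue_nonneg hv i
  have hSC : ∑ i ∈ S, c i k ≤ C k :=
    (sum_le_sum_of_subset_of_nonneg (filter_subset _ _) fun i _ _ => (hc i k).le).trans (hopt k)
  have hCk : 0 < C k :=
    (hc i₀ k).trans_le ((single_le_sum (fun i _ => (hc i k).le) hi₀).trans hSC)
  rw [sum_congr rfl fun i hi => jobValue_of_eq_some (hSk i hi),
    sum_congr rfl fun i (hi : i ∈ jobsOn Astar k) => jobValue_of_eq_some (mem_jobsOn.1 hi)]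
  refine mul_sum_le_sum_of_mul_le_mul (hv · k) hCk hSC (hblocked i₀ hi₀).2 fun i hi j hj => ?_
  exact (div_le_div_iff₀ (hc i k) (hc j k)).1 ((hblocked i hi).1 j (mem_jobsOn.1 hj))

theorem mul_sum_gaining_le (hv : ∀ i k, 0 ≤ v i k) (hc : ∀ i k, 0 < c i k)
    (hopt : IsFeasible c C Aopt) (hstable : IsStable v c C θ Astar) :
    θ * ∑ i with jobValue v Astar i < jobValue v Aopt i, jobValue v Aopt i ≤
      ∑ i, jobValue v Astar i := by
  set B : Finset Job := univ.filter fun i => jobValue v Astar i < jobValue v Aopt i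
  calc θ * ∑ i ∈ B, jobValue v Aopt i
      = ∑ o ∈ B.image Aopt, θ * ∑ i ∈ B with Aopt i = o, jobValue v Aopt i := by
        rw [← mul_sum, sum_fiberwise_of_maps_to fun i hi => mem_image_of_mem Aopt hi]
    _ ≤ ∑ o ∈ B.image Aopt, ∑ i with Astar i = o, jobValue v Astar i := by
        refine sum_le_sum fun o _ => ?_
        cases o with
        | none =>
          rw [sum_eq_zero fun i hi => by simp [jobValue, (mem_filter.1 hi).2], mul_zero]
          exact sum_nonneg fun i _ => jobValue_nonneg hv i
        | some k =>
          have hfiber : {i ∈ B | Aopt i = some k} =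
              {i ∈ jobsOn Aopt k | jobValue v Astar i < jobValue v Aopt i} := by
            ext i
            simp only [B, mem_filter, mem_univ, true_and, mem_jobsOn, and_comm]
          rw [hfiber]
          exact mul_sum_gaining_on_le hv hc hopt hstable k
    _ ≤ ∑ i, jobValue v Astar i :=
        sum_fiberwise_le_sum_of_sum_fiber_nonneg fun _ _ =>
          sum_nonneg fun i _ => jobValue_nonneg hv i

theorem sum_not_gaining_le (hv : ∀ i k, 0 ≤ v i k) :
    ∑ i with ¬ jobValue v Astar i < jobValue v Aopt i, jobValue v Aopt i ≤
      ∑ i, jobValue v Astar i :=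
  calc _ ≤ ∑ i with ¬ jobValue v Astar i < jobValue v Aopt i, jobValue v Astar i :=
        sum_le_sum fun _ hi => not_lt.1 (mem_filter.1 hi).2
    _ ≤ ∑ i, jobValue v Astar i :=
        sum_le_sum_of_subset_of_nonneg (subset_univ _) fun i _ _ => jobValue_nonneg hv i

end GAP

theorem stmt10_general {Job Machine : Type*} [Fintype Job]
    (v c : Job → Machine → ℝ) (C : Machine → ℝ) (lam : ℕ) (hlam : 2 < lam)
    (hv : ∀ i k, 0 ≤ v i k) (hc : ∀ i k, 0 < c i k)
    (Astar Aopt : Job → Option Machine)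
    (hfeas_opt : ∀ k, ∑ i ∈ Finset.univ.filter (fun i => Aopt i = some k), c i k ≤ C k)
    (hstable : ∀ i k, Astar i ≠ some k →
      (v i k ≤ (Astar i).elim 0 (v i)) ∨
      ((∀ i', Astar i' = some k → v i k / c i k ≤ v i' k / c i' k) ∧
        ((lam : ℝ) - 1) / lam * C k ≤
          ∑ i' ∈ Finset.univ.filter (fun i' => Astar i' = some k), c i' k)) :
    ∑ i, (Aopt i).elim 0 (v i) ≤
      (2 + 1 / ((lam : ℝ) - 1)) * ∑ i, (Astar i).elim 0 (v i) := by
  have hlam1 : (0 : ℝ) < lam - 1 := by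
    have : (2 : ℝ) < lam := by exact_mod_cast hlam
    linarith
  set V := ∑ i, jobValue v Astar i
  set gaining := fun i => jobValue v Astar i < jobValue v Aopt i
  have hrest : ∑ i with ¬ gaining i, jobValue v Aopt i ≤ V := sum_not_gaining_le hv
  have hgaining : ∑ i with gaining i, jobValue v Aopt i ≤ lam / (lam - 1) * V := by
    have h := mul_sum_gaining_le hv hc (C := C) hfeas_opt hstable
    rw [div_mul_eq_mul_div, div_le_iff₀ (by linarith)] at h
    rw [div_mul_eq_mul_div, le_div_iff₀ hlam1]
    linarith
  have hcoef : 2 + 1 / ((lam : ℝ) - 1) = 1 + lam / (lam - 1) := by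
    field_simp
    ring
  change ∑ i, jobValue v Aopt i ≤ _ * V
  rw [← sum_filter_add_sum_filter_not univ gaining, hcoef, add_mul]
  linarith

/-- GAP: if every pair satisfies `c i k ≤ C k / λ` and `A*` is a stable assignment
(for every unassigned pair `(i,k)`, either job `i` weakly prefers its machine by value, or
machine `k` prefers each of its assigned jobs by density and its load is at least the
virtual capacity `(λ−1)/λ · C k`), then any feasible assignment `OPT` satisfies
`v(OPT) ≤ (2 + 1/(λ−1)) · v(A*)`. -/
theorem stmt10 {Job Machine : Type*} [Fintype Job]
    (v c : Job → Machine → ℝ) (C : Machine → ℝ) (lam : ℕ) (hlam : 2 < lam)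
    (hv : ∀ i k, 0 ≤ v i k) (hc : ∀ i k, 0 < c i k)
    (hsmall : ∀ i k, c i k ≤ C k / lam)
    (Astar Aopt : Job → Option Machine)
    (hfeas_star : ∀ k, ∑ i ∈ Finset.univ.filter (fun i => Astar i = some k), c i k ≤ C k)
    (hfeas_opt : ∀ k, ∑ i ∈ Finset.univ.filter (fun i => Aopt i = some k), c i k ≤ C k)
    (hstable : ∀ i k, Astar i ≠ some k →
      (v i k ≤ (Astar i).elim 0 (v i)) ∨
      ((∀ i', Astar i' = some k → v i k / c i k ≤ v i' k / c i' k) ∧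
        ((lam : ℝ) - 1) / lam * C k ≤
          ∑ i' ∈ Finset.univ.filter (fun i' => Astar i' = some k), c i' k)) :
    ∑ i, (Aopt i).elim 0 (v i) ≤
      (2 + 1 / ((lam : ℝ) - 1)) * ∑ i, (Astar i).elim 0 (v i) :=
  stmt10_general v c C lam hlam hv hc Astar Aopt hfeas_opt hstable
end

section
/- In GAP restricted to 'large' pairs where c_{ik} ≥ C_k/λ for every compatible pair (i,k), any maximal greedy assignment A (jobs and machines matched one-to-one greedily by decreasing v_{ik}) satisfies 2λ·v(A) ≥ v(OPT), where OPT is an optimal (capacity-feasible) assignment. -/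
open Classical

/-- GAP restricted to large pairs (`c i k ≥ C k / λ`, so any machine takes at most `λ`
jobs): if `A` is a one-to-one assignment produced greedily by decreasing value (so whenever
a job strictly prefers a machine `k` to its own assignment, `k` holds a job of at least
that value), then `2λ · v(A) ≥ v(OPT)` for every capacity-feasible assignment `OPT`. -/
theorem stmt11 {Job Machine : Type*} [Fintype Job]
    (v c : Job → Machine → ℝ) (C : Machine → ℝ) (lam : ℕ) (hlam : 0 < lam)
    (hv : ∀ i k, 0 ≤ v i k) (hc : ∀ i k, 0 < c i k) (hC : ∀ k, 0 < C k)
    (hlarge : ∀ i k, C k / lam ≤ c i k)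
    (A Aopt : Job → Option Machine)
    (hA_one : ∀ i i' k, A i = some k → A i' = some k → i = i')
    (hA_greedy : ∀ i k, (A i).elim 0 (v i) < v i k →
      ∃ i', A i' = some k ∧ v i k ≤ v i' k)
    (hfeas_opt : ∀ k, ∑ i ∈ Finset.univ.filter (fun i => Aopt i = some k), c i k ≤ C k) :
    ∑ i, (Aopt i).elim 0 (v i) ≤ 2 * (lam : ℝ) * ∑ i, (A i).elim 0 (v i) := by
  classical
  set f : Job → ℝ := fun j => (A j).elim 0 (v j) with hf
  have hf0 : ∀ j, 0 ≤ f j := by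
    intro j; cases h : A j <;> simp [hf, h, hv]
  have hfval : ∀ j k, A j = some k → f j = v j k := by
    intro j k h; simp [hf, h]
  -- the value held by machine k in A
  set w : Machine → ℝ := fun k =>
    if h : ∃ j, A j = some k then v h.choose k else 0 with hw
  have hw_eq : ∀ j k, A j = some k → w k = v j k := by
    intro j k hj
    have he : ∃ j', A j' = some k := ⟨j, hj⟩
    have hj0 : he.choose = j := hA_one _ _ _ he.choose_spec hj
    simp [hw, dif_pos he, hj0]
  have hw0 : ∀ k, 0 ≤ w k := by
    intro k; by_cases h : ∃ j, A j = some k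
    · simp only [hw, dif_pos h]; exact hv _ _
    · simp [hw, dif_neg h]
  set W : Job → ℝ := fun i => (Aopt i).elim 0 w with hW
  -- Step 1: pointwise bound
  have step1 : ∀ i, (Aopt i).elim 0 (v i) ≤ f i + W i := by
    intro i
    cases h : Aopt i with
    | none => simpa [hW, h] using hf0 i
    | some k =>
      simp only [hW, h, Option.elim]
      by_cases hle : v i k ≤ f i
      · linarith [hw0 k]
      · push_neg at hle
        obtain ⟨i', hi', hvi⟩ := hA_greedy i k (by simpa [hf] using hle)
        have hwk : v i k ≤ w k := by rw [hw_eq i' k hi']; exact hvi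
        linarith [hf0 i]
  -- capacity: at most lam OPT jobs per machine
  have card_opt : ∀ k, ((Finset.univ.filter (fun i => Aopt i = some k)).card : ℝ) ≤ lam := by
    intro k
    set s := Finset.univ.filter (fun i => Aopt i = some k) with hs
    have h1 : (s.card : ℝ) * (C k / lam) ≤ ∑ i ∈ s, c i k := by
      calc (s.card : ℝ) * (C k / lam) = ∑ _i ∈ s, (C k / lam) := by
            rw [Finset.sum_const, nsmul_eq_mul]
        _ ≤ ∑ i ∈ s, c i k := Finset.sum_le_sum fun i _ => hlarge i k
    have h2 : (s.card : ℝ) * (C k / lam) ≤ (lam : ℝ) * (C k / lam) := by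
      have : (lam : ℝ) * (C k / lam) = C k := by
        field_simp
      linarith [hfeas_opt k, h1]
    have hpos : 0 < C k / lam := div_pos (hC k) (by exact_mod_cast hlam)
    exact le_of_mul_le_mul_right h2 hpos
  -- Step 2: W i ≤ sum of f over jobs assigned (in A) to machine Aopt i
  have step2 : ∀ i, W i ≤ ∑ j, (if A j = Aopt i ∧ (Aopt i).isSome then f j else 0) := by
    intro i
    have hnn : ∀ (o : Option Machine), ∀ j ∈ Finset.univ,
        (0:ℝ) ≤ if A j = o ∧ o.isSome then f j else 0 := by
      intro o j _; split
      · exact hf0 j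
      · exact le_refl 0
    cases h : Aopt i with
    | none =>
      have hWi : W i = 0 := by simp [hW, h]
      rw [hWi]
      exact Finset.sum_nonneg (hnn none)
    | some k =>
      have hWi : W i = w k := by simp [hW, h]
      by_cases he : ∃ j, A j = some k
      · obtain ⟨j0, hj0⟩ := he
        have hWf : W i = f j0 := by rw [hWi, hw_eq j0 k hj0, hfval j0 k hj0]
        rw [hWf]
        have := Finset.single_le_sum (hnn (some k)) (Finset.mem_univ j0)
        simpa [hj0] using this
      · have hWi0 : W i = 0 := by rw [hWi]; simp [hw, dif_neg he]
        rw [hWi0]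
        exact Finset.sum_nonneg (hnn (some k))
  -- Step 3: sum of W is at most lam * sum of f
  have step3 : ∑ i, W i ≤ (lam : ℝ) * ∑ j, f j := by
    calc ∑ i, W i ≤ ∑ i, ∑ j, (if A j = Aopt i ∧ (Aopt i).isSome then f j else 0) :=
          Finset.sum_le_sum fun i _ => step2 i
      _ = ∑ j, ∑ i, (if A j = Aopt i ∧ (Aopt i).isSome then f j else 0) := Finset.sum_comm
      _ ≤ ∑ j, (lam : ℝ) * f j := by
          apply Finset.sum_le_sum
          intro j _
          cases hj : A j with
          | none =>
            have hz : ∀ i, (if (none : Option Machine) = Aopt i ∧ (Aopt i).isSome then f j else 0) = 0 := by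
              intro i
              rw [if_neg]
              rintro ⟨h1, h2⟩
              rw [← h1] at h2
              simp at h2
            rw [Finset.sum_congr rfl fun i _ => hz i, Finset.sum_const_zero]
            have := hf0 j
            positivity
          | some k =>
            have heq : ∀ i, (if (some k : Option Machine) = Aopt i ∧ (Aopt i).isSome then f j else 0)
                = (if Aopt i = some k then f j else 0) := by
              intro i
              by_cases h : Aopt i = some k
              · rw [if_pos, if_pos h]; rw [h]; simp
              · rw [if_neg, if_neg h]
                rintro ⟨h1, _⟩
                exact h h1.symm
            rw [Finset.sum_congr rfl fun i _ => heq i]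
            rw [← Finset.sum_filter, Finset.sum_const, nsmul_eq_mul]
            exact mul_le_mul_of_nonneg_right (card_opt k) (hf0 j)
      _ = (lam : ℝ) * ∑ j, f j := by rw [Finset.mul_sum]
  -- combine
  have hsumf : 0 ≤ ∑ j, f j := Finset.sum_nonneg fun j _ => hf0 j
  have hlam1 : (1 : ℝ) ≤ lam := by exact_mod_cast hlam
  calc ∑ i, (Aopt i).elim 0 (v i) ≤ ∑ i, (f i + W i) := Finset.sum_le_sum fun i _ => step1 i
    _ = ∑ i, f i + ∑ i, W i := Finset.sum_add_distrib
    _ ≤ ∑ i, f i + (lam : ℝ) * ∑ j, f j := by linarith [step3]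
    _ ≤ 2 * (lam : ℝ) * ∑ i, f i := by nlinarith
    _ = 2 * (lam : ℝ) * ∑ i, (A i).elim 0 (v i) := rfl
end

section
/- No deterministic truthful mechanism without money for the matching problem with unit-demand agents can achieve an approximation ratio strictly better than 2 for social welfare. -/
/-- Edge values in the lower-bound instance: four edges `(t,u) : Fin 2 × Fin 2`,
with `v(t,u₀) = 1 + ε` and `v(t,u₁) = 1`. -/
def edgeVal (ε : ℝ) (e : Fin 2 × Fin 2) : ℝ := if e.2 = 0 then 1 + ε else 1

/-- An outcome (each of the two agents gets at most one edge) is feasible for reports `B`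
if every selected edge was reported by its agent and the selected edges form a matching. -/
def Feasible13 (B : Fin 2 → Finset (Fin 2 × Fin 2))
    (out : Fin 2 → Option (Fin 2 × Fin 2)) : Prop :=
  (∀ i e, out i = some e → e ∈ B i) ∧
  (∀ i j, i ≠ j → ∀ e f, out i = some e → out j = some f → e.1 ≠ f.1 ∧ e.2 ≠ f.2)

/-- Utility of an agent: the value of the edge selected for it, 0 if none. -/
def util13 (ε : ℝ) (o : Option (Fin 2 × Fin 2)) : ℝ := o.elim 0 (edgeVal ε)

/-- Social welfare of an outcome. -/
def welfare13 (ε : ℝ) (out : Fin 2 → Option (Fin 2 × Fin 2)) : ℝ :=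
  ∑ i, util13 ε (out i)

lemma utilLe13 (ε : ℝ) (hε : 0 ≤ ε) (o : Option (Fin 2 × Fin 2)) : util13 ε o ≤ 1 + ε := by
  cases o with
  | none => simp [util13]; linarith
  | some e => simp [util13, edgeVal]; split_ifs <;> linarith

lemma sum_fin2 (f : Fin 2 → ℝ) (i : Fin 2) : ∑ k, f k = f i + f (1 - i) := by
  fin_cases i <;> simp [Fin.sum_univ_two] <;> try ring

lemma helper13 (ρ ε : ℝ) (hρ : 0 ≤ ρ) (hεpos : 0 < ε)
    (key : ρ * (1 + ε) < 2 + ε)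
    (M : (Fin 2 → Finset (Fin 2 × Fin 2)) → (Fin 2 → Option (Fin 2 × Fin 2)))
    (hfeas : ∀ B, Feasible13 B (M B))
    (htruth : ∀ B i B', B' ⊆ B i →
      util13 ε (M (Function.update B i B') i) ≤ util13 ε (M B i))
    (happrox : ∀ B out, Feasible13 B out → welfare13 ε out ≤ ρ * welfare13 ε (M B))
    (i : Fin 2)
    (hui : util13 ε (M (fun k => {(k,0),(k,1)}) i) ≤ 1) : False := by
  set B : Fin 2 → Finset (Fin 2 × Fin 2) := fun k => {(k,0),(k,1)} with hB
  set B₁ := Function.update B i ({(i,(0:Fin 2))} : Finset (Fin 2 × Fin 2)) with hB₁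
  have hsub : ({(i,(0:Fin 2))} : Finset (Fin 2 × Fin 2)) ⊆ B i := by
    intro e he; simp at he; simp [hB, he]
  have htr := htruth B i _ hsub
  have hij : (1 - i) ≠ i := by fin_cases i <;> decide
  -- the mechanism gives agent i nothing after the deviation
  have hMi : M B₁ i = none := by
    rcases h : M B₁ i with _ | e
    · rfl
    · exfalso
      have he : e ∈ B₁ i := (hfeas B₁).1 i e h
      rw [hB₁, Function.update_self] at he
      simp only [Finset.mem_singleton] at he
      subst he
      rw [h] at htr
      simp only [util13, Option.elim, edgeVal] at htr
      simp at htr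
      linarith [htr.trans hui]
  -- welfare of the mechanism after deviation is small
  have hw : welfare13 ε (M B₁) ≤ 1 + ε := by
    rw [welfare13, sum_fin2 _ i, hMi]
    have hz : util13 ε (none : Option (Fin 2 × Fin 2)) = 0 := rfl
    rw [hz]
    have := utilLe13 ε (le_of_lt hεpos) (M B₁ (1 - i))
    linarith
  -- a good feasible outcome after deviation
  have hgood : Feasible13 B₁ (fun k => if k = i then some (i,(0:Fin 2)) else some (k,(1:Fin 2))) := by
    constructor
    · intro k e hk
      by_cases h : k = i
      · subst h
        simp at hk
        subst hk
        rw [hB₁, Function.update_self]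
        simp
      · simp [h] at hk
        subst hk
        rw [hB₁, Function.update_of_ne h]
        simp [hB]
    · intro k l hkl e f hk hl
      fin_cases k <;> fin_cases l <;> fin_cases i <;> simp_all <;> subst hk <;> subst hl <;> exact ⟨by decide, by decide⟩
  have happ := happrox B₁ _ hgood
  have hwgood : welfare13 ε (fun k => if k = i then some (i,(0:Fin 2)) else some (k,(1:Fin 2))) = 2 + ε := by
    rw [welfare13, sum_fin2 _ i]
    simp [hij, util13, edgeVal]
    ring
  rw [hwgood] at happ
  have : ρ * welfare13 ε (M B₁) ≤ ρ * (1 + ε) := mul_le_mul_of_nonneg_left hw hρ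
  linarith

/-- No deterministic truthful mechanism without money for the unit-demand matching
problem has approximation ratio strictly better than 2: for every `ρ < 2` there is an
instance (the 2×2 instance with values `1 + ε` and `1`) on which no mechanism is
simultaneously feasible, truthful (hiding edges never helps) and `ρ`-approximate. -/
theorem stmt13 (ρ : ℝ) (hρ : 0 < ρ) (hρ2 : ρ < 2) :
    ∃ ε : ℝ, 0 < ε ∧
      ¬ ∃ M : (Fin 2 → Finset (Fin 2 × Fin 2)) → (Fin 2 → Option (Fin 2 × Fin 2)),
        (∀ B, Feasible13 B (M B)) ∧
        (∀ B i B', B' ⊆ B i →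
          util13 ε (M (Function.update B i B') i) ≤ util13 ε (M B i)) ∧
        (∀ B out, Feasible13 B out → welfare13 ε out ≤ ρ * welfare13 ε (M B)) := by
  refine ⟨(2 - ρ)/2, by linarith, ?_⟩
  set ε := (2 - ρ)/2 with hε
  have hεpos : 0 < ε := by rw [hε]; linarith
  have key : ρ * (1 + ε) < 2 + ε := by rw [hε]; nlinarith
  rintro ⟨M, hfeas, htruth, happrox⟩
  set B : Fin 2 → Finset (Fin 2 × Fin 2) := fun k => {(k,0),(k,1)} with hB
  -- optimal outcome on the true instance
  have hopt : Feasible13 B (fun k => some (k, k)) := by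
    constructor
    · intro k e hk
      simp at hk
      subst hk
      fin_cases k <;> simp [hB]
    · intro k l hkl e f hk hl
      simp at hk hl
      subst hk; subst hl
      exact ⟨hkl, hkl⟩
  have happ := happrox B _ hopt
  have hwopt : welfare13 ε (fun k => some (k, k)) = 2 + ε := by
    simp [welfare13, Fin.sum_univ_two, util13, edgeVal]
    ring
  rw [hwopt] at happ
  -- the mechanism must serve both agents on the true instance
  have hserve : ∀ i : Fin 2, M B i ≠ none := by
    intro i hnone
    have hw : welfare13 ε (M B) ≤ 1 + ε := by
      rw [welfare13, sum_fin2 _ i, hnone]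
      have hz : util13 ε (none : Option (Fin 2 × Fin 2)) = 0 := rfl
      rw [hz]
      have := utilLe13 ε (le_of_lt hεpos) (M B (1 - i))
      linarith
    have : ρ * welfare13 ε (M B) ≤ ρ * (1 + ε) := mul_le_mul_of_nonneg_left hw (le_of_lt hρ)
    linarith
  rcases h0 : M B 0 with _ | e0
  · exact hserve 0 h0
  rcases h1 : M B 1 with _ | e1
  · exact hserve 1 h1
  have he0 : e0 ∈ B 0 := (hfeas B).1 0 e0 h0
  have he1 : e1 ∈ B 1 := (hfeas B).1 1 e1 h1
  simp [hB] at he0 he1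
  have hcols := ((hfeas B).2 0 1 (by decide) e0 e1 h0 h1).2
  -- one of the two served agents gets the value-1 edge
  rcases he0 with he0 | he0 <;> rcases he1 with he1 | he1 <;> subst he0 <;> subst he1
  · exact absurd rfl hcols
  · refine helper13 ρ ε (le_of_lt hρ) hεpos key M hfeas htruth happrox 1 ?_
    rw [show (fun k : Fin 2 => ({(k,0),(k,1)} : Finset (Fin 2 × Fin 2))) = B from rfl, h1]
    simp [util13, edgeVal]
  · refine helper13 ρ ε (le_of_lt hρ) hεpos key M hfeas htruth happrox 0 ?_
    rw [show (fun k : Fin 2 => ({(k,0),(k,1)} : Finset (Fin 2 × Fin 2))) = B from rfl, h0]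
    simp [util13, edgeVal]
  · exact absurd rfl hcols
end

section
/- Let A⁽¹⁾ and A⁽²⁾ be the GAP assignments produced by the value-greedy algorithm and the stable matching algorithm, respectively, and let A^opt be an optimal assignment. Then 2·v(A⁽¹⁾) + 2·v(A⁽²⁾) ≥ v(A^opt); hence running one of the two uniformly at random gives a 4-approximation in expectation. -/
open Classical

private lemma gap_key {Job Machine : Type*} [Fintype Job]
    (v c : Job → Machine → ℝ) (C : Machine → ℝ)
    (hv : ∀ i k, 0 ≤ v i k) (hc : ∀ i k, 0 < c i k)
    (A1 A2 Aopt : Job → Option Machine)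
    (hfeas_opt : ∀ k, ∑ i ∈ Finset.univ.filter (fun i => Aopt i = some k), c i k ≤ C k)
    (hgreedy : ∀ i k, (A1 i).elim 0 (v i) < v i k →
      v i k ≤ ∑ i' ∈ Finset.univ.filter (fun i' => A1 i' = some k), v i' k)
    (hstable : ∀ i k, (A2 i).elim 0 (v i) < v i k →
      (∀ i', A2 i' = some k → v i k / c i k ≤ v i' k / c i' k) ∧
      C k < (∑ i' ∈ Finset.univ.filter (fun i' => A2 i' = some k), c i' k) + c i k)
    (k : Machine) (B : Finset Job)
    (hB : ∀ i ∈ B, Aopt i = some k ∧ (A1 i).elim 0 (v i) < v i k ∧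
      (A2 i).elim 0 (v i) < v i k) :
    ∑ i ∈ B, v i k ≤ (∑ i' ∈ Finset.univ.filter (fun i' => A1 i' = some k), v i' k)
      + (∑ i' ∈ Finset.univ.filter (fun i' => A2 i' = some k), v i' k) := by
  classical
  rcases B.eq_empty_or_nonempty with rfl | ⟨i0, hi0⟩
  · simpa using add_nonneg (Finset.sum_nonneg fun i _ => hv i k)
      (Finset.sum_nonneg fun i _ => hv i k)
  set A2F := Finset.univ.filter (fun i' => A2 i' = some k) with hA2F
  set cA2 := ∑ i' ∈ A2F, c i' k with hcA2
  set vA2 := ∑ i' ∈ A2F, v i' k with hvA2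
  have hvA2_nonneg : 0 ≤ vA2 := Finset.sum_nonneg fun i _ => hv i k
  have hBsub : B ⊆ Finset.univ.filter (fun i => Aopt i = some k) := fun i hi =>
    Finset.mem_filter.mpr ⟨Finset.mem_univ i, (hB i hi).1⟩
  have hcB : ∑ i ∈ B, c i k ≤ C k :=
    le_trans (Finset.sum_le_sum_of_subset_of_nonneg hBsub (fun i _ _ => (hc i k).le))
      (hfeas_opt k)
  have hci0 : c i0 k ≤ ∑ i ∈ B, c i k := Finset.single_le_sum (fun i _ => (hc i k).le) hi0
  have hstab0 := hstable i0 k (hB i0 hi0).2.2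
  have hsplitc : c i0 k + ∑ i ∈ B.erase i0, c i k = ∑ i ∈ B, c i k :=
    Finset.add_sum_erase B (fun i => c i k) hi0
  have hcA2_pos : 0 < cA2 := by
    have := hstab0.2
    have := hc i0 k
    linarith
  have hB' : ∑ i ∈ B.erase i0, c i k < cA2 := by
    have := hstab0.2
    linarith
  have hmain : ∑ i ∈ B.erase i0, v i k ≤ vA2 := by
    have h1 : (∑ i ∈ B.erase i0, v i k) * cA2 ≤ vA2 * cA2 := by
      calc (∑ i ∈ B.erase i0, v i k) * cA2
          = ∑ i ∈ B.erase i0, ∑ j ∈ A2F, v i k * c j k := by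
            rw [Finset.sum_mul]
            exact Finset.sum_congr rfl fun i _ => (Finset.mul_sum _ _ _)
        _ ≤ ∑ i ∈ B.erase i0, ∑ j ∈ A2F, v j k * c i k := by
            apply Finset.sum_le_sum
            intro i hi
            apply Finset.sum_le_sum
            intro j hj
            have hd := (hstable i k (hB i (Finset.mem_of_mem_erase hi)).2.2).1 j
              (Finset.mem_filter.mp hj).2
            have := (div_le_div_iff₀ (hc i k) (hc j k)).mp hd
            linarith
        _ = vA2 * ∑ i ∈ B.erase i0, c i k := by
            rw [Finset.mul_sum]
            exact Finset.sum_congr rfl fun i _ => (Finset.sum_mul _ _ _).symm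
        _ ≤ vA2 * cA2 := mul_le_mul_of_nonneg_left hB'.le hvA2_nonneg
    exact le_of_mul_le_mul_right h1 hcA2_pos
  have hgr : v i0 k ≤ ∑ i' ∈ Finset.univ.filter (fun i' => A1 i' = some k), v i' k :=
    hgreedy i0 k (hB i0 hi0).2.1
  have hsplitv : v i0 k + ∑ i ∈ B.erase i0, v i k = ∑ i ∈ B, v i k :=
    Finset.add_sum_erase B (fun i => v i k) hi0
  linarith

/-- GAP 4-approximation core inequality: if `A¹` is a greedy-by-value assignment (whenever
a job strictly prefers machine `k` to its own assignment, the jobs assigned to `k` are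
worth at least that value) and `A²` is a stable assignment (whenever a job strictly
prefers machine `k`, machine `k` prefers each assigned job by density and has no room for
the job), then every feasible assignment `A^opt` satisfies
`v(A^opt) ≤ 2·v(A¹) + 2·v(A²)`; hence running `A¹` or `A²` uniformly at random is a
4-approximation in expectation. -/
theorem stmt19 {Job Machine : Type*} [Fintype Job]
    (v c : Job → Machine → ℝ) (C : Machine → ℝ)
    (hv : ∀ i k, 0 ≤ v i k) (hc : ∀ i k, 0 < c i k)
    (A1 A2 Aopt : Job → Option Machine)
    (hfeas1 : ∀ k, ∑ i ∈ Finset.univ.filter (fun i => A1 i = some k), c i k ≤ C k)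
    (hfeas2 : ∀ k, ∑ i ∈ Finset.univ.filter (fun i => A2 i = some k), c i k ≤ C k)
    (hfeas_opt : ∀ k, ∑ i ∈ Finset.univ.filter (fun i => Aopt i = some k), c i k ≤ C k)
    (hgreedy : ∀ i k, (A1 i).elim 0 (v i) < v i k →
      v i k ≤ ∑ i' ∈ Finset.univ.filter (fun i' => A1 i' = some k), v i' k)
    (hstable : ∀ i k, (A2 i).elim 0 (v i) < v i k →
      (∀ i', A2 i' = some k → v i k / c i k ≤ v i' k / c i' k) ∧
      C k < (∑ i' ∈ Finset.univ.filter (fun i' => A2 i' = some k), c i' k) + c i k) :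
    ∑ i, (Aopt i).elim 0 (v i) ≤
      2 * (∑ i, (A1 i).elim 0 (v i)) + 2 * (∑ i, (A2 i).elim 0 (v i)) := by
  classical
  set val1 : Job → ℝ := fun i => (A1 i).elim 0 (v i) with hval1def
  set val2 : Job → ℝ := fun i => (A2 i).elim 0 (v i) with hval2def
  set valo : Job → ℝ := fun i => (Aopt i).elim 0 (v i) with hvalodef
  have hval1_nonneg : ∀ i, 0 ≤ val1 i := fun i => by
    simp only [hval1def]; cases h : A1 i <;> simp [h, hv]
  have hval2_nonneg : ∀ i, 0 ≤ val2 i := fun i => by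
    simp only [hval2def]; cases h : A2 i <;> simp [h, hv]
  have hvalo_nonneg : ∀ i, 0 ≤ valo i := fun i => by
    simp only [hvalodef]; cases h : Aopt i <;> simp [h, hv]
  -- partition jobs
  set p1 : Job → Prop := fun i => valo i ≤ val1 i with hp1def
  set p2 : Job → Prop := fun i => valo i ≤ val2 i with hp2def
  set S1 : Finset Job := Finset.univ.filter p1 with hS1def
  set S2 : Finset Job := Finset.univ.filter (fun i => ¬ p1 i ∧ p2 i) with hS2def
  set Sb : Finset Job := Finset.univ.filter (fun i => ¬ p1 i ∧ ¬ p2 i) with hSbdef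
  have hsplit : ∑ i, valo i = ∑ i ∈ S1, valo i + ∑ i ∈ S2, valo i + ∑ i ∈ Sb, valo i := by
    rw [hS1def, hS2def, hSbdef]
    rw [← Finset.sum_filter_add_sum_filter_not Finset.univ p1 valo]
    have h2 : (Finset.univ.filter fun i => ¬ p1 i)
        = (Finset.univ.filter fun i => ¬ p1 i ∧ p2 i)
          ∪ (Finset.univ.filter fun i => ¬ p1 i ∧ ¬ p2 i) := by
      ext i
      by_cases h : p1 i <;> by_cases h' : p2 i <;> simp [h, h']
    rw [h2, Finset.sum_union]
    · ring
    · rw [Finset.disjoint_left]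
      intro i hi hi'
      exact (Finset.mem_filter.mp hi').2.2 (Finset.mem_filter.mp hi).2.2
  have hb1 : ∑ i ∈ S1, valo i ≤ ∑ i, val1 i := by
    calc ∑ i ∈ S1, valo i ≤ ∑ i ∈ S1, val1 i :=
          Finset.sum_le_sum fun i hi => (Finset.mem_filter.mp hi).2
      _ ≤ ∑ i, val1 i := Finset.sum_le_sum_of_subset_of_nonneg (Finset.subset_univ _)
          (fun i _ _ => hval1_nonneg i)
  have hb2 : ∑ i ∈ S2, valo i ≤ ∑ i, val2 i := by
    calc ∑ i ∈ S2, valo i ≤ ∑ i ∈ S2, val2 i :=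
          Finset.sum_le_sum fun i hi => (Finset.mem_filter.mp hi).2.2
      _ ≤ ∑ i, val2 i := Finset.sum_le_sum_of_subset_of_nonneg (Finset.subset_univ _)
          (fun i _ _ => hval2_nonneg i)
  -- work on Sb
  have hSbsome : ∀ i ∈ Sb, ∃ k, Aopt i = some k ∧ val1 i < v i k ∧ val2 i < v i k := by
    intro i hi
    obtain ⟨-, h1, h2⟩ := Finset.mem_filter.mp hi
    simp only [hp1def, hp2def] at h1 h2
    cases h : Aopt i with
    | none =>
        exfalso
        have hz : valo i = 0 := by simp [hvalodef, h]
        exact h1 (hz.le.trans (hval1_nonneg i))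
    | some k =>
        have hvk : valo i = v i k := by simp [hvalodef, h]
        exact ⟨k, rfl, by rw [← hvk]; exact lt_of_not_ge h1,
          by rw [← hvk]; exact lt_of_not_ge h2⟩
  set Km : Finset Machine := Sb.biUnion (fun i => (Aopt i).toFinset) with hKmdef
  have hfib : ∀ i ∈ Sb, ∀ k, Aopt i = some k → k ∈ Km := by
    intro i hi k hk
    rw [hKmdef]
    exact Finset.mem_biUnion.mpr ⟨i, hi, by simp [hk]⟩
  have hcover : Sb = Km.biUnion (fun k => Sb.filter (fun i => Aopt i = some k)) := by
    ext i
    simp only [Finset.mem_biUnion, Finset.mem_filter]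
    constructor
    · intro hi
      obtain ⟨k, hk, -⟩ := hSbsome i hi
      exact ⟨k, hfib i hi k hk, hi, hk⟩
    · rintro ⟨k, -, hi, -⟩
      exact hi
  have hdisj : ∀ A : Job → Option Machine, ∀ s : Finset Job,
      (↑Km : Set Machine).PairwiseDisjoint (fun k => s.filter (fun i => A i = some k)) := by
    intro A s k _ k' _ hkk'
    rw [Function.onFun, Finset.disjoint_left]
    intro i hi hi'
    apply hkk'
    have h1 := (Finset.mem_filter.mp hi).2
    have h2 := (Finset.mem_filter.mp hi').2
    rw [h1] at h2
    exact Option.some.inj h2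
  have hbb : ∑ i ∈ Sb, valo i ≤ ∑ i, val1 i + ∑ i, val2 i := by
    have hsum : ∑ i ∈ Sb, valo i
        = ∑ k ∈ Km, ∑ i ∈ Sb.filter (fun i => Aopt i = some k), valo i := by
      conv_lhs => rw [hcover]
      exact Finset.sum_biUnion (hdisj Aopt Sb)
    rw [hsum]
    have hstep : ∀ k ∈ Km, ∑ i ∈ Sb.filter (fun i => Aopt i = some k), valo i
        ≤ (∑ i' ∈ Finset.univ.filter (fun i' => A1 i' = some k), v i' k)
          + (∑ i' ∈ Finset.univ.filter (fun i' => A2 i' = some k), v i' k) := by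
      intro k _
      have heq : ∑ i ∈ Sb.filter (fun i => Aopt i = some k), valo i
          = ∑ i ∈ Sb.filter (fun i => Aopt i = some k), v i k := by
        apply Finset.sum_congr rfl
        intro i hi
        have := (Finset.mem_filter.mp hi).2
        simp [hvalodef, this]
      rw [heq]
      apply gap_key v c C hv hc A1 A2 Aopt hfeas_opt hgreedy hstable k
      intro i hi
      obtain ⟨hiSb, hik⟩ := Finset.mem_filter.mp hi
      obtain ⟨k', hk', h1, h2⟩ := hSbsome i hiSb
      rw [hik] at hk'
      cases Option.some.inj hk'
      exact ⟨hik, h1, h2⟩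
    calc ∑ k ∈ Km, ∑ i ∈ Sb.filter (fun i => Aopt i = some k), valo i
        ≤ ∑ k ∈ Km, ((∑ i' ∈ Finset.univ.filter (fun i' => A1 i' = some k), v i' k)
          + (∑ i' ∈ Finset.univ.filter (fun i' => A2 i' = some k), v i' k)) :=
          Finset.sum_le_sum hstep
      _ = (∑ k ∈ Km, ∑ i' ∈ Finset.univ.filter (fun i' => A1 i' = some k), v i' k)
          + ∑ k ∈ Km, ∑ i' ∈ Finset.univ.filter (fun i' => A2 i' = some k), v i' k :=
          Finset.sum_add_distrib
      _ ≤ ∑ i, val1 i + ∑ i, val2 i := by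
          have key : ∀ (A : Job → Option Machine),
              (∑ k ∈ Km, ∑ i' ∈ Finset.univ.filter (fun i' => A i' = some k), v i' k)
                ≤ ∑ i, (A i).elim 0 (v i) := by
            intro A
            have heq : ∀ k, (∑ i' ∈ Finset.univ.filter (fun i' => A i' = some k), v i' k)
                = ∑ i' ∈ Finset.univ.filter (fun i' => A i' = some k), (A i').elim 0 (v i') := by
              intro k
              apply Finset.sum_congr rfl
              intro i hi
              have := (Finset.mem_filter.mp hi).2
              simp [this]
            calc (∑ k ∈ Km, ∑ i' ∈ Finset.univ.filter (fun i' => A i' = some k), v i' k)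
                = ∑ k ∈ Km, ∑ i' ∈ Finset.univ.filter (fun i' => A i' = some k),
                    (A i').elim 0 (v i') := Finset.sum_congr rfl fun k _ => heq k
              _ = ∑ i ∈ Km.biUnion (fun k => Finset.univ.filter (fun i' => A i' = some k)),
                    (A i).elim 0 (v i) := (Finset.sum_biUnion (hdisj A Finset.univ)).symm
              _ ≤ ∑ i, (A i).elim 0 (v i) :=
                  Finset.sum_le_sum_of_subset_of_nonneg (Finset.subset_univ _)
                    (fun i _ _ => by cases h : A i <;> simp [h, hv])
          exact add_le_add (key A1) (key A2)
  linarith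
end
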